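/- arXiv:1103.5159 — 2 statements merged into one kernel-verified Lean document; each statement's English description precedes it below -/
import Mathlib

section
/- For every m ≥ 1 and n ≥ 1, m^n = Σ_{d | n} d · χ_d(m), where χ_d(m) = (1/d) Σ_{e | d} μ(e) m^{d/e}. -/
/-- Witt number `χ_n(m) = (1/n) Σ_{d | n} μ(d) m^{n/d}` as a rational number. -/
noncomputable def witt (n m : ℕ) : ℚ :=
  (1 / n) * ∑ d ∈ n.divisors, ((ArithmeticFunction.moebius d : ℤ) : ℚ) * (m : ℚ) ^ (n / d)

open ArithmeticFunction Finset
open scoped ArithmeticFunction.Moebius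

theorem sum_divisors_sum_moebius_mul_div {R : Type*} [NonAssocRing R] (g : ℕ → R) {n : ℕ}
    (hn : 0 < n) : ∑ d ∈ n.divisors, ∑ e ∈ d.divisors, (μ e : R) * g (d / e) = g n :=
  sum_eq_iff_sum_mul_moebius_eq.mpr
    (fun _ _ => Nat.sum_divisorsAntidiagonal fun e f => (μ e : R) * g f) n hn

theorem natCast_mul_witt {d : ℕ} (hd : d ≠ 0) (m : ℕ) :
    (d : ℚ) * witt d m = ∑ e ∈ d.divisors, (μ e : ℚ) * (m : ℚ) ^ (d / e) := by
  rw [witt]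
  field_simp

theorem stmt5_general (m n : ℕ) (hn : 1 ≤ n) :
    (m : ℚ) ^ n = ∑ d ∈ n.divisors, (d : ℚ) * witt d m := by
  rw [sum_congr rfl fun d hd => natCast_mul_witt (Nat.pos_of_mem_divisors hd).ne' m]
  exact (sum_divisors_sum_moebius_mul_div (fun k => (m : ℚ) ^ k) hn).symm

/-- For `m ≥ 1`, `n ≥ 1`, `m^n = Σ_{d | n} d · χ_d(m)`. -/
theorem stmt5 (m n : ℕ) (hm : 1 ≤ m) (hn : 1 ≤ n) :
    (m : ℚ) ^ n = ∑ d ∈ n.divisors, (d : ℚ) * witt d m :=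
  stmt5_general m n hn
end

section
/- Let m ≥ 1. Then the Baer invariant of the free abelian group Z^m with respect to the variety of metabelian groups is free abelian of rank χ₂(χ₂(m)) = (1/2)·binom(m,2)·(binom(m,2) − 1), where χ₂(d) = d(d−1)/2. -/
/-!
Let `H` be free and `π : H → ℤ^ι` surjective with kernel `N`, and let `s i` lift the basis
vectors. Modulo `[N, H]` the subgroup `N` is central and `H` is generated by the `s i` and `N`,
so `[H, H] / [N, H]` is abelian and generated by the classes of `[s i, s j]`, `i < j`. These are
independent: `π` lifts to the free nilpotent group of class two on `ι`, which kills `[N, H]`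
and sends `[s i, s j]` to the `(i, j)`-th central basis vector. Hence
`[H, H] / [N, H] ≅ ℤ^{χ₂(|ι|)}`. For `F` free of rank `m` and `π` its abelianization this
gives `γ₂ F / γ₃ F ≅ ℤ^{χ₂(m)}`; as `γ₂ F` is free again (Nielsen–Schreier), applying the same
statement to `γ₂ F → γ₂ F / γ₃ F` gives `[γ₂ F, γ₂ F] / [γ₃ F, γ₂ F] ≅ ℤ^{χ₂(χ₂(m))}`.
-/

open Subgroup

open scoped IsMulCommutative commutatorElement

section IntPi

variable {ι : Type*} [Fintype ι] [DecidableEq ι]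

theorem prod_ofAdd_single_zpow (a : ι → ℤ) :
    ∏ i, Multiplicative.ofAdd (Pi.single i 1 : ι → ℤ) ^ a i = Multiplicative.ofAdd a := by
  simp only [← ofAdd_zsmul, ← ofAdd_sum]
  congr 1
  ext j
  simp [Finset.sum_apply, Pi.single_apply]

theorem closure_range_ofAdd_single :
    Subgroup.closure (Set.range fun i ↦ Multiplicative.ofAdd (Pi.single i 1 : ι → ℤ)) = ⊤ :=
  eq_top_iff.mpr fun x _ ↦
    mem_closure_range_iff_of_fintype.mpr ⟨x.toAdd, (prod_ofAdd_single_zpow x.toAdd).symm⟩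

theorem MonoidHom.bijective_of_map_eq_ofAdd_single {G : Type*} [CommGroup G]
    (f : G →* Multiplicative (ι → ℤ)) (g : ι → G) (hg : Subgroup.closure (Set.range g) = ⊤)
    (hf : ∀ i, f (g i) = Multiplicative.ofAdd (Pi.single i 1)) : Function.Bijective f := by
  have hprod (a : ι → ℤ) : f (∏ i, g i ^ a i) = Multiplicative.ofAdd a := by
    simp only [map_prod, map_zpow, hf, prod_ofAdd_single_zpow]
  refine ⟨fun x y hxy ↦ ?_, fun v ↦ ⟨_, hprod v.toAdd⟩⟩
  obtain ⟨a, rfl⟩ := exists_of_mem_closure_range g x (hg ▸ mem_top x)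
  obtain ⟨b, rfl⟩ := exists_of_mem_closure_range g y (hg ▸ mem_top y)
  rw [hprod, hprod] at hxy
  rw [Multiplicative.ofAdd.injective hxy]

end IntPi

theorem IsFreeGroup.exists_comp_eq_of_surjective {H G G' : Type*} [Group H] [IsFreeGroup H]
    [Group G] [Group G'] {p : G →* G'} (hp : Function.Surjective p) (f : H →* G') :
    ∃ g : H →* G, p.comp g = f := by
  choose s hs using fun a ↦ hp (f (IsFreeGroup.of a))
  exact ⟨IsFreeGroup.lift s, IsFreeGroup.ext_hom fun a ↦ by simp [IsFreeGroup.lift_of, hs]⟩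

theorem closure_sup_ker_eq_top {G G' : Type*} [Group G] [Group G'] (f : G →* G') {S : Set G}
    (hS : Subgroup.closure (f '' S) = ⊤) : Subgroup.closure S ⊔ f.ker = ⊤ := by
  rw [← comap_map_eq, MonoidHom.map_closure, hS, comap_top]

theorem commutator_le_closure_sup_commutator {H : Type*} [Group H] {N : Subgroup H} [N.Normal]
    {S C : Set H} (hS : Subgroup.closure S ⊔ N = ⊤) (hC : C ⊆ N)
    (hSC : ∀ s ∈ S, ∀ t ∈ S, ⁅s, t⁆ ∈ Subgroup.closure C) :
    commutator H ≤ Subgroup.closure C ⊔ ⁅N, ⊤⁆ := by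
  set P := Subgroup.closure C ⊔ ⁅N, ⊤⁆
  have hPN : P ≤ N := sup_le ((Subgroup.closure_le N).mpr hC) (commutator_le_left N ⊤)
  have : P.Normal :=
    commutator_top_right_le_iff.mp ((commutator_mono hPN le_rfl).trans le_sup_right)
  have hNP {n : H} (hn : n ∈ N) (h : H) : ⁅n, h⁆ ∈ P :=
    mem_sup_right (commutator_mem_commutator hn (mem_top h))
  let mk := QuotientGroup.mk' P
  have hgen : Subgroup.closure (mk '' (S ∪ N)) = ⊤ := by
    rw [← MonoidHom.map_closure, Subgroup.closure_union, Subgroup.closure_eq, hS,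
      map_top_of_surjective _ (QuotientGroup.mk'_surjective P)]
  rw [← Normal.quotient_commutative_iff_commutator_le]
  refine Function.Surjective.mul_comm (f := (Subgroup.closure (mk '' (S ∪ N))).subtype)
    (fun x ↦ ⟨⟨x, hgen ▸ mem_top x⟩, rfl⟩) (isMulCommutative_closure ?_)
  rintro _ ⟨x, hx, rfl⟩ _ ⟨y, hy, rfl⟩
  rw [← commutatorElement_eq_one_iff_mul_comm, ← map_commutatorElement, QuotientGroup.mk'_apply,
    QuotientGroup.eq_one_iff]
  rcases hx with hx | hx
  · rcases hy with hy | hy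
    · exact mem_sup_left (hSC x hx y hy)
    · exact commutatorElement_inv y x ▸ inv_mem (hNP hy x)
  · exact hNP hx y

theorem closure_range_mk_eq_top {H : Type*} [Group H] {A K : Subgroup H}
    [(K.subgroupOf A).Normal] (hKA : K ≤ A) {κ : Type*} (q : κ → A)
    (hA : A ≤ Subgroup.closure (Set.range fun i ↦ (q i : H)) ⊔ K) :
    Subgroup.closure (Set.range fun i ↦ (q i : A ⧸ K.subgroupOf A)) = ⊤ := by
  set R := (Subgroup.closure (Set.range fun i ↦ (q i : A ⧸ K.subgroupOf A))).comap
    (QuotientGroup.mk' (K.subgroupOf A))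
  suffices hAR : A ≤ R.map A.subtype by
    refine eq_top_iff.mpr fun x _ ↦ ?_
    induction x using QuotientGroup.induction_on with | H x =>
    obtain ⟨y, hy, hyx⟩ := hAR x.2
    rwa [← Subtype.ext hyx]
  refine hA.trans (sup_le ((Subgroup.closure_le _).mpr ?_) fun k hk ↦ ?_)
  · rintro _ ⟨i, rfl⟩
    exact ⟨q i, Subgroup.subset_closure ⟨i, rfl⟩, rfl⟩
  · refine ⟨⟨k, hKA hk⟩, ?_, rfl⟩
    have hk1 : ((⟨k, hKA hk⟩ : A) : A ⧸ K.subgroupOf A) = 1 :=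
      (QuotientGroup.eq_one_iff _).mpr (mem_subgroupOf.mpr hk)
    simp [R, hk1]

theorem nonempty_quotient_subgroupOf_mulEquiv_of_map_eq {G G' : Type*} [Group G] [Group G']
    {f : G →* G'} (hf : Function.Injective f) {P Q : Subgroup G} {P' Q' : Subgroup G'}
    (hP : P.map f = P') (hQ : Q.map f = Q') [(Q.subgroupOf P).Normal]
    [(Q'.subgroupOf P').Normal] :
    Nonempty (P ⧸ Q.subgroupOf P ≃* P' ⧸ Q'.subgroupOf P') := by
  subst hP hQ
  refine ⟨QuotientGroup.congr _ _ (P.equivMapOfInjective f hf) ?_⟩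
  ext ⟨_, x, hx, rfl⟩
  simp [mem_subgroupOf, Subtype.ext_iff, hf.eq_iff, SetLike.mem_coe.mp hx]

abbrev StrictPairs (ι : Type*) [LinearOrder ι] := {p : ι × ι // p.1 < p.2}

theorem card_strictPairs (ι : Type*) [Fintype ι] [LinearOrder ι] :
    Fintype.card (StrictPairs ι) = (Fintype.card ι).choose 2 := by
  rw [Fintype.card_subtype, Fintype.card_product_filter_lt]

section PairProduct

variable {ι : Type*} [LinearOrder ι]

def pairProduct (a b : ι → ℤ) : StrictPairs ι → ℤ := fun p ↦ a p.1.1 * b p.1.2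

@[simp]
theorem pairProduct_zero_left (b : ι → ℤ) : pairProduct 0 b = 0 := by
  ext; simp [pairProduct]

theorem pairProduct_single_single_of_lt {i j : ι} (h : i < j) :
    pairProduct (Pi.single i 1) (Pi.single j 1) = Pi.single ⟨(i, j), h⟩ 1 := by
  ext ⟨⟨k, l⟩, hkl⟩
  by_cases hk : k = i <;> by_cases hl : l = j <;> simp [pairProduct, hk, hl]

theorem pairProduct_single_single_of_gt {i j : ι} (h : j < i) :
    pairProduct (Pi.single i 1) (Pi.single j 1) = 0 := by
  ext ⟨⟨k, l⟩, hkl⟩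
  simp only [pairProduct, Pi.single_apply, Pi.zero_apply, mul_ite, mul_one, mul_zero]
  split_ifs <;> subst_vars <;> first | rfl | exact absurd (h.trans hkl) (lt_irrefl _)

variable (ι) in
/-- The free nilpotent group of class two on `ι`, in Mal'cev coordinates; for two generators
this is the integral Heisenberg group. -/
@[ext]
structure Heisenberg where
  fst : ι → ℤ
  snd : StrictPairs ι → ℤ

namespace Heisenberg

instance : Mul (Heisenberg ι) :=
  ⟨fun g h ↦ ⟨g.fst + h.fst, g.snd + h.snd + pairProduct g.fst h.fst⟩⟩
instance : One (Heisenberg ι) := ⟨⟨0, 0⟩⟩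
instance : Inv (Heisenberg ι) := ⟨fun g ↦ ⟨-g.fst, pairProduct g.fst g.fst - g.snd⟩⟩

@[simp] theorem fst_mul (g h : Heisenberg ι) : (g * h).fst = g.fst + h.fst := rfl
@[simp] theorem snd_mul (g h : Heisenberg ι) :
    (g * h).snd = g.snd + h.snd + pairProduct g.fst h.fst := rfl
@[simp] theorem fst_one : (1 : Heisenberg ι).fst = 0 := rfl
@[simp] theorem snd_one : (1 : Heisenberg ι).snd = 0 := rfl
@[simp] theorem fst_inv (g : Heisenberg ι) : g⁻¹.fst = -g.fst := rfl
@[simp] theorem snd_inv (g : Heisenberg ι) : g⁻¹.snd = pairProduct g.fst g.fst - g.snd := rfl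

instance : Group (Heisenberg ι) :=
  Group.ofLeftAxioms
    (fun _ _ _ ↦ by ext <;> simp [pairProduct] <;> ring)
    (fun _ ↦ by ext <;> simp)
    (fun _ ↦ by ext <;> simp [pairProduct])

theorem commutatorElement_eq (g h : Heisenberg ι) :
    ⁅g, h⁆ = ⟨0, pairProduct g.fst h.fst - pairProduct h.fst g.fst⟩ := by
  ext <;> simp [commutatorElement_def, pairProduct]; ring

theorem commutatorElement_of_fst_eq_single {i j : ι} (hij : i < j) {g h : Heisenberg ι}
    (hg : g.fst = Pi.single i 1) (hh : h.fst = Pi.single j 1) :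
    ⁅g, h⁆ = ⟨0, Pi.single ⟨(i, j), hij⟩ 1⟩ := by
  rw [commutatorElement_eq, hg, hh, pairProduct_single_single_of_lt hij,
    pairProduct_single_single_of_gt hij, sub_zero]

def fstHom : Heisenberg ι →* Multiplicative (ι → ℤ) where
  toFun g := Multiplicative.ofAdd g.fst
  map_one' := rfl
  map_mul' _ _ := rfl

theorem fstHom_surjective : Function.Surjective (fstHom (ι := ι)) :=
  fun a ↦ ⟨⟨a.toAdd, 0⟩, rfl⟩

theorem ker_fstHom_le_center : (fstHom (ι := ι)).ker ≤ center (Heisenberg ι) := by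
  intro g hg
  have hg : g.fst = 0 := congrArg Multiplicative.toAdd hg
  refine mem_center_iff.mpr fun h ↦ ?_
  ext <;> simp [hg, pairProduct]; ring

def sndHom : (fstHom (ι := ι)).ker →* Multiplicative (StrictPairs ι → ℤ) where
  toFun g := Multiplicative.ofAdd (g : Heisenberg ι).snd
  map_one' := rfl
  map_mul' g h := by
    have hg : (g : Heisenberg ι).fst = 0 := congrArg Multiplicative.toAdd g.2
    simp [hg, ← ofAdd_add]

end Heisenberg

end PairProduct

section PairCommutators

variable {H : Type*} [Group H] {ι : Type*} [LinearOrder ι]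

def pairCommutator (s : ι → H) (p : StrictPairs ι) : commutator H :=
  ⟨⁅s p.1.1, s p.1.2⁆, commutator_mem_commutator (mem_top _) (mem_top _)⟩

theorem commutator_le_closure_pairCommutator_sup [Fintype ι] [DecidableEq ι]
    (π : H →* Multiplicative (ι → ℤ)) (s : ι → H)
    (hs : ∀ i, π (s i) = Multiplicative.ofAdd (Pi.single i 1)) :
    commutator H ≤
      Subgroup.closure (Set.range fun p ↦ (pairCommutator s p : H)) ⊔ ⁅π.ker, ⊤⁆ := by
  refine commutator_le_closure_sup_commutator (S := Set.range s) ?_ ?_ ?_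
  · refine closure_sup_ker_eq_top π ?_
    rw [← Set.range_comp]
    convert closure_range_ofAdd_single (ι := ι) using 3
    exact funext hs
  · rintro _ ⟨p, rfl⟩
    exact Abelianization.commutator_subset_ker π (pairCommutator s p).2
  · rintro _ ⟨i, rfl⟩ _ ⟨j, rfl⟩
    rcases lt_trichotomy i j with hij | rfl | hij
    · exact Subgroup.subset_closure ⟨⟨(i, j), hij⟩, rfl⟩
    · rw [commutatorElement_self]
      exact one_mem _
    · rw [← commutatorElement_inv]
      exact inv_mem (Subgroup.subset_closure ⟨⟨(j, i), hij⟩, rfl⟩)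

theorem exists_monoidHom_commutator_pairCommutator [IsFreeGroup H]
    (π : H →* Multiplicative (ι → ℤ)) (s : ι → H)
    (hs : ∀ i, π (s i) = Multiplicative.ofAdd (Pi.single i 1)) :
    ∃ Φ : commutator H →* Multiplicative (StrictPairs ι → ℤ),
      (⁅π.ker, ⊤⁆ : Subgroup H).subgroupOf (commutator H) ≤ Φ.ker ∧
        ∀ p, Φ (pairCommutator s p) = Multiplicative.ofAdd (Pi.single p 1) := by
  obtain ⟨ρ, hρ⟩ := IsFreeGroup.exists_comp_eq_of_surjective Heisenberg.fstHom_surjective π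
  have hρN : π.ker.map ρ ≤ Heisenberg.fstHom.ker := by
    rw [← hρ, ← MonoidHom.comap_ker]
    exact map_comap_le _ _
  have hKρ : ⁅π.ker, ⊤⁆ ≤ ρ.ker := by
    rw [← Subgroup.map_eq_bot_iff, map_commutator, eq_bot_iff]
    exact (commutator_mono (hρN.trans Heisenberg.ker_fstHom_le_center) le_top).trans
      (commutator_center_left _).le
  have hρs (i : ι) : (ρ (s i)).fst = Pi.single i 1 :=
    congrArg Multiplicative.toAdd ((DFunLike.congr_fun hρ (s i)).trans (hs i))
  refine ⟨Heisenberg.sndHom.comp ((ρ.comp (commutator H).subtype).codRestrict _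
    fun x ↦ hρN ⟨x, Abelianization.commutator_subset_ker π x.2, rfl⟩), fun x hx ↦ ?_, ?_⟩
  · have : ρ x = 1 := hKρ (mem_subgroupOf.mp hx)
    simp [MonoidHom.mem_ker, Heisenberg.sndHom, this]
  · rintro ⟨⟨i, j⟩, hij⟩
    simp [Heisenberg.sndHom, pairCommutator,
      Heisenberg.commutatorElement_of_fst_eq_single hij (hρs i) (hρs j)]

end PairCommutators

theorem nonempty_commutator_quotient_mulEquiv {H : Type*} [Group H] [IsFreeGroup H]
    {ι : Type*} [Fintype ι] [LinearOrder ι] (π : H →* Multiplicative (ι → ℤ))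
    (hπ : Function.Surjective π) :
    Nonempty (commutator H ⧸ (⁅π.ker, ⊤⁆ : Subgroup H).subgroupOf (commutator H) ≃*
      Multiplicative (StrictPairs ι → ℤ)) := by
  choose s hs using fun i ↦ hπ (Multiplicative.ofAdd (Pi.single i 1))
  obtain ⟨Φ, hΦK, hΦs⟩ := exists_monoidHom_commutator_pairCommutator π s hs
  have hKA : ⁅π.ker, ⊤⁆ ≤ commutator H := commutator_mono le_top le_rfl
  have :
      IsMulCommutative (commutator H ⧸ (⁅π.ker, ⊤⁆ : Subgroup H).subgroupOf (commutator H)) := by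
    refine Normal.quotient_commutative_iff_commutator_le.mpr (map_le_iff_le_comap.mp ?_)
    rw [map_subtype_commutator]
    exact commutator_mono (Abelianization.commutator_subset_ker π) le_top
  exact ⟨MulEquiv.ofBijective (QuotientGroup.lift _ Φ hΦK)
    (MonoidHom.bijective_of_map_eq_ofAdd_single _ _
      (closure_range_mk_eq_top hKA _ (commutator_le_closure_pairCommutator_sup π s hs)) hΦs)⟩

theorem nonempty_commutator_quotient_mulEquiv_fin {H : Type*} [Group H] [IsFreeGroup H]
    {ι : Type*} [Fintype ι] [LinearOrder ι] (π : H →* Multiplicative (ι → ℤ))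
    (hπ : Function.Surjective π) :
    Nonempty (commutator H ⧸ (⁅π.ker, ⊤⁆ : Subgroup H).subgroupOf (commutator H) ≃*
      Multiplicative (Fin ((Fintype.card ι).choose 2) → ℤ)) := by
  obtain ⟨e⟩ := nonempty_commutator_quotient_mulEquiv π hπ
  exact ⟨e.trans (LinearEquiv.funCongrLeft ℤ ℤ
    (Fintype.equivFinOfCardEq (card_strictPairs ι)).symm).toAddEquiv.toMultiplicative⟩

theorem exists_surjective_ker_eq_commutator {F X : Type*} [Group F] [Finite X]
    (e : F ≃* FreeGroup X) :
    ∃ π : F →* Multiplicative (X → ℤ), Function.Surjective π ∧ π.ker = commutator F := by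
  let a : Abelianization F ≃* Multiplicative (X → ℤ) := e.abelianizationCongr.trans
    (AddEquiv.toMultiplicativeRight (G := Abelianization (FreeGroup X))
      ((FreeAbelianGroup.equivFinsupp X).trans Finsupp.addEquivFunOnFinite))
  refine ⟨(a : Abelianization F →* _).comp Abelianization.of, ?_, ?_⟩
  · exact a.surjective.comp QuotientGroup.mk_surjective
  · rw [MonoidHom.ker_mulEquiv_comp, Abelianization.ker_of]

theorem nonempty_metabelian_quotient_mulEquiv {F : Type*} [Group F] [IsFreeGroup F]
    {ι : Type*} [Fintype ι] [LinearOrder ι] (π : F →* Multiplicative (ι → ℤ))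
    (hπ : Function.Surjective π) (hker : π.ker = commutator F) :
    Nonempty
      ((↥⁅(⊤ : Subgroup F).lowerCentralSeries 1, (⊤ : Subgroup F).lowerCentralSeries 1⁆ ⧸
          ⁅(⊤ : Subgroup F).lowerCentralSeries 2, (⊤ : Subgroup F).lowerCentralSeries 1⁆.subgroupOf
            ⁅(⊤ : Subgroup F).lowerCentralSeries 1, (⊤ : Subgroup F).lowerCentralSeries 1⁆) ≃*
        Multiplicative (Fin (((Fintype.card ι).choose 2).choose 2) → ℤ)) := by
  set A := commutator F
  obtain ⟨e₁⟩ := nonempty_commutator_quotient_mulEquiv_fin π hπ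
  -- `A` is itself free by the Nielsen–Schreier instance `subgroupIsFreeOfIsFree`.
  let π₁ : A →* _ := e₁.toMonoidHom.comp (QuotientGroup.mk' _)
  obtain ⟨e₂⟩ := nonempty_commutator_quotient_mulEquiv_fin π₁
    (e₁.surjective.comp (QuotientGroup.mk'_surjective _))
  rw [Fintype.card_fin] at e₂
  have hKA : ⁅π.ker, ⊤⁆ ≤ A := commutator_mono le_top le_rfl
  have hQ : (⁅π₁.ker, ⊤⁆ : Subgroup A).map A.subtype =
      ⁅(⊤ : Subgroup F).lowerCentralSeries 2, A⁆ := by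
    rw [MonoidHom.ker_comp_of_injective _ _ e₁.injective, QuotientGroup.ker_mk', map_commutator,
      subgroupOf_map_subtype, inf_of_le_left hKA, ← MonoidHom.range_eq_map, range_subtype, hker]
    rfl
  obtain ⟨e₃⟩ := nonempty_quotient_subgroupOf_mulEquiv_of_map_eq A.subtype_injective
    (map_subtype_commutator A) hQ
  exact ⟨e₃.symm.trans e₂⟩

theorem stmt15_general (m : ℕ) (F : Type) [Group F] (e : F ≃* FreeGroup (Fin m))
    (r : ℕ)
    (hr : (r : ℚ) = (1 / 2) * (m.choose 2 : ℚ) * ((m.choose 2 : ℚ) - 1)) :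
    Nonempty
      ((↥⁅(⊤ : Subgroup F).lowerCentralSeries 1, (⊤ : Subgroup F).lowerCentralSeries 1⁆ ⧸
          ⁅(⊤ : Subgroup F).lowerCentralSeries 2, (⊤ : Subgroup F).lowerCentralSeries 1⁆.subgroupOf
            ⁅(⊤ : Subgroup F).lowerCentralSeries 1, (⊤ : Subgroup F).lowerCentralSeries 1⁆) ≃*
        Multiplicative (Fin r →₀ ℤ)) := by
  have : IsFreeGroup F := IsFreeGroup.ofMulEquiv e.symm
  obtain ⟨π, hπ, hker⟩ := exists_surjective_ker_eq_commutator e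
  obtain ⟨e'⟩ := nonempty_metabelian_quotient_mulEquiv π hπ hker
  obtain rfl : r = (m.choose 2).choose 2 := by
    have : (r : ℚ) = ((m.choose 2).choose 2 : ℕ) := by
      rw [hr, Nat.cast_choose_two ℚ (m.choose 2)]; ring
    exact_mod_cast this
  rw [Fintype.card_fin] at e'
  exact ⟨e'.trans Finsupp.addEquivFunOnFinite.symm.toMultiplicative⟩

/-- For `m ≥ 1`, the Baer invariant of `ℤ^m = F/γ₂(F)` (`F` free of rank `m`)
with respect to the variety of metabelian groups, namely
`γ₂(γ₂(F))/[γ₃(F), γ₂(F)]` (with `γ_{k+1}(F) = lowerCentralSeries F k`), is free abelian of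
rank `χ₂(χ₂(m)) = (1/2)·C(m,2)·(C(m,2) − 1)`, where `χ₂(d) = d(d−1)/2`. -/
theorem stmt15 (m : ℕ) (hm : 1 ≤ m) (F : Type) [Group F] (e : F ≃* FreeGroup (Fin m))
    (r : ℕ)
    (hr : (r : ℚ) = (1 / 2) * (m.choose 2 : ℚ) * ((m.choose 2 : ℚ) - 1)) :
    Nonempty
      ((↥⁅(⊤ : Subgroup F).lowerCentralSeries 1, (⊤ : Subgroup F).lowerCentralSeries 1⁆ ⧸
          ⁅(⊤ : Subgroup F).lowerCentralSeries 2, (⊤ : Subgroup F).lowerCentralSeries 1⁆.subgroupOf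
            ⁅(⊤ : Subgroup F).lowerCentralSeries 1, (⊤ : Subgroup F).lowerCentralSeries 1⁆) ≃*
        Multiplicative (Fin r →₀ ℤ)) :=
  stmt15_general m F e r hr
end
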